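/- arXiv:1502.01919 — 4 statements merged into one kernel-verified Lean document; each statement's English description precedes it below -/
import Mathlib

section
/- For every real number k > 0 and all real numbers s < t, the arc length of the logarithmic spiral from parameter s to t is bounded by √(k² + 1)/k times the chord length: ∫_s^t ‖φ'(r)‖ dr ≤ (√(k² + 1) / k) · ‖φ(t) − φ(s)‖. -/
open Real

/-!
Identify `ℝ²` isometrically with `ℂ` via the basis `1, I`: the spiral becomes `r ↦ exp ((k + I) r)`.
Its speed is `‖k + I‖ e^{kr} = √(k² + 1) e^{kr}` while its modulus is `e^{kr}`, so the arc length
from `s` to `t` is `(√(k² + 1) / k) (e^{kt} - e^{ks})`, and by the reverse triangle inequality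
`e^{kt} - e^{ks} = ‖φ t‖ - ‖φ s‖ ≤ ‖φ t - φ s‖`.
-/

theorem LinearIsometryEquiv.deriv_comp {E F : Type*} [NormedAddCommGroup E] [NormedSpace ℝ E]
    [NormedAddCommGroup F] [NormedSpace ℝ F] (e : E ≃ₗᵢ[ℝ] F) (γ : ℝ → E) (r : ℝ) :
    deriv (e ∘ γ) r = e (deriv γ r) := by
  simp only [deriv, e.comp_fderiv]
  rfl

namespace Complex

theorem hasDerivAt_exp_mul_ofReal (c : ℂ) (r : ℝ) :
    HasDerivAt (fun r : ℝ => cexp (c * r)) (c * cexp (c * r)) r := by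
  simpa [mul_comm] using ((hasDerivAt_id (r : ℂ)).const_mul c).cexp.comp_ofReal

theorem norm_deriv_exp_mul_ofReal (c : ℂ) (r : ℝ) :
    ‖deriv (fun r : ℝ => cexp (c * r)) r‖ = ‖c‖ * Real.exp (c.re * r) := by
  rw [(hasDerivAt_exp_mul_ofReal c r).deriv, norm_mul, norm_exp, re_mul_ofReal]

theorem integral_norm_deriv_exp_mul_ofReal {c : ℂ} (hc : c.re ≠ 0) (s t : ℝ) :
    ∫ r in s..t, ‖deriv (fun r : ℝ => cexp (c * r)) r‖ =
      ‖c‖ / c.re * (Real.exp (c.re * t) - Real.exp (c.re * s)) := by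
  simp only [norm_deriv_exp_mul_ofReal]
  rw [intervalIntegral.integral_const_mul, intervalIntegral.integral_comp_mul_left _ hc,
    integral_exp, smul_eq_mul]
  ring

theorem integral_norm_deriv_exp_mul_ofReal_le {c : ℂ} (hc : 0 < c.re) (s t : ℝ) :
    ∫ r in s..t, ‖deriv (fun r : ℝ => cexp (c * r)) r‖ ≤
      ‖c‖ / c.re * ‖cexp (c * t) - cexp (c * s)‖ := by
  rw [integral_norm_deriv_exp_mul_ofReal hc.ne']
  gcongr
  calc Real.exp (c.re * t) - Real.exp (c.re * s) = ‖cexp (c * t)‖ - ‖cexp (c * s)‖ := by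
        simp only [norm_exp, re_mul_ofReal]
    _ ≤ ‖cexp (c * t) - cexp (c * s)‖ := norm_sub_norm_le _ _

theorem orthonormalBasisOneI_repr_exp_mul_ofReal (k s : ℝ) :
    orthonormalBasisOneI.repr (cexp ((k + I) * s)) =
      (WithLp.equiv 2 (Fin 2 → ℝ)).symm
        ![Real.exp (k * s) * Real.cos s, Real.exp (k * s) * Real.sin s] := by
  ext i
  fin_cases i <;> simp [exp_re, exp_im]

end Complex

theorem log_spiral_arclength_le_chord_general (k : ℝ) (hk : 0 < k)
    (φ : ℝ → EuclideanSpace ℝ (Fin 2))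
    (hφ : φ = fun s => (WithLp.equiv 2 (Fin 2 → ℝ)).symm
      ![Real.exp (k * s) * Real.cos s, Real.exp (k * s) * Real.sin s])
    (s t : ℝ) :
    ∫ r in s..t, ‖deriv φ r‖ ≤
      (Real.sqrt (k ^ 2 + 1) / k) * ‖φ t - φ s‖ := by
  have hφ_exp :
      φ = Complex.orthonormalBasisOneI.repr ∘ fun r : ℝ => Complex.exp ((k + Complex.I) * r) := by
    subst hφ
    funext r
    exact (Complex.orthonormalBasisOneI_repr_exp_mul_ofReal k r).symm
  have hre : ((k : ℂ) + Complex.I).re = k := by simp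
  have hnorm : ‖(k : ℂ) + Complex.I‖ = √(k ^ 2 + 1) := by simpa using Complex.norm_add_mul_I k 1
  have key :=
    Complex.integral_norm_deriv_exp_mul_ofReal_le (c := k + Complex.I) (by simpa using hk) s t
  rw [hre, hnorm] at key
  simpa only [hφ_exp, LinearIsometryEquiv.deriv_comp, LinearIsometryEquiv.norm_map,
    Function.comp_apply, ← map_sub] using key

/-- For every `k > 0` and `s < t`, the arc length of the logarithmic spiral
`φ(s) = e^{ks} (cos s, sin s)` from parameter `s` to `t` is at most
`√(k² + 1)/k` times the chord length `‖φ(t) − φ(s)‖`. -/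
theorem log_spiral_arclength_le_chord (k : ℝ) (hk : 0 < k)
    (φ : ℝ → EuclideanSpace ℝ (Fin 2))
    (hφ : φ = fun s => (WithLp.equiv 2 (Fin 2 → ℝ)).symm
      ![Real.exp (k * s) * Real.cos s, Real.exp (k * s) * Real.sin s])
    (s t : ℝ) (hst : s < t) :
    ∫ r in s..t, ‖deriv φ r‖ ≤
      (Real.sqrt (k ^ 2 + 1) / k) * ‖φ t - φ s‖ :=
  log_spiral_arclength_le_chord_general k hk φ hφ s t
end

section
/- For every real number k > 0, the supremum over all pairs of parameters s < t of the chord-arc ratio of the logarithmic spiral equals √(k² + 1)/k; that is, sSup { (∫_s^t ‖φ'(r)‖ dr) / ‖φ(t) − φ(s)‖ : s, t ∈ ℝ, s < t } = √(k² + 1) / k. In particular, the distortion of the logarithmic spiral (including its center) equals √(k² + 1)/k. -/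
/-!
Since `‖φ s‖ = e^{ks}` and `‖φ' s‖ = √(k² + 1) e^{ks}`, the arc from `s` to `t` has length
`√(k² + 1)/k · (‖φ t‖ - ‖φ s‖)`, which is at most `√(k² + 1)/k · ‖φ t - φ s‖` by the reverse
triangle inequality. Over a full turn `t = s + 2π` the two points lie on the same ray from the
origin, so the inequality is an equality there.
-/

open Real

lemma EuclideanSpace.norm_equiv_symm_pair (a b : ℝ) :
    ‖(WithLp.equiv 2 (Fin 2 → ℝ)).symm ![a, b]‖ = √(a ^ 2 + b ^ 2) := by
  simp [EuclideanSpace.norm_eq, Fin.sum_univ_two]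

noncomputable def logSpiral (k s : ℝ) : EuclideanSpace ℝ (Fin 2) :=
  (WithLp.equiv 2 (Fin 2 → ℝ)).symm ![exp (k * s) * cos s, exp (k * s) * sin s]

namespace logSpiral

variable (k : ℝ)

lemma norm_apply (s : ℝ) : ‖logSpiral k s‖ = exp (k * s) := by
  rw [logSpiral, EuclideanSpace.norm_equiv_symm_pair, sqrt_eq_iff_mul_self_eq_of_pos (exp_pos _)]
  linear_combination -exp (k * s) ^ 2 * sin_sq_add_cos_sq s

lemma add_two_pi (s : ℝ) :
    logSpiral k (s + 2 * π) = exp (k * (2 * π)) • logSpiral k s := by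
  ext i
  fin_cases i <;> simp [logSpiral, mul_add, exp_add, mul_assoc, mul_left_comm]

lemma hasDerivAt (r : ℝ) :
    HasDerivAt (logSpiral k) ((WithLp.equiv 2 (Fin 2 → ℝ)).symm
      ![exp (k * r) * (k * cos r - sin r), exp (k * r) * (k * sin r + cos r)]) r := by
  have hexp : HasDerivAt (fun s => exp (k * s)) (exp (k * r) * k) r := by
    simpa using ((hasDerivAt_id r).const_mul k).exp
  have hcoords : HasDerivAt (fun s => ![exp (k * s) * cos s, exp (k * s) * sin s])
      ![exp (k * r) * (k * cos r - sin r), exp (k * r) * (k * sin r + cos r)] r := by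
    rw [hasDerivAt_pi, Fin.forall_fin_two]
    exact ⟨(hexp.mul (hasDerivAt_cos r)).congr_deriv
        (by simp only [Matrix.cons_val_zero]; ring),
      (hexp.mul (hasDerivAt_sin r)).congr_deriv
        (by simp only [Matrix.cons_val_one, Matrix.cons_val_fin_one]; ring)⟩
  exact (PiLp.continuousLinearEquiv 2 ℝ _).symm.hasFDerivAt.comp_hasDerivAt r hcoords

lemma norm_deriv (r : ℝ) : ‖deriv (logSpiral k) r‖ = √(k ^ 2 + 1) * exp (k * r) := by
  rw [(hasDerivAt k r).deriv, EuclideanSpace.norm_equiv_symm_pair,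
    sqrt_eq_iff_mul_self_eq_of_pos (by positivity)]
  linear_combination exp (k * r) ^ 2 * (sq_sqrt (by positivity : (0 : ℝ) ≤ k ^ 2 + 1)
    - (k ^ 2 + 1) * sin_sq_add_cos_sq r)

lemma integral_norm_deriv {k : ℝ} (hk : k ≠ 0) (s t : ℝ) :
    ∫ r in s..t, ‖deriv (logSpiral k) r‖ = √(k ^ 2 + 1) / k * (exp (k * t) - exp (k * s)) := by
  simp_rw [norm_deriv, intervalIntegral.integral_const_mul]
  rw [intervalIntegral.integral_comp_mul_left exp hk, integral_exp, smul_eq_mul]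
  ring

lemma exp_sub_exp_le_norm_sub (s t : ℝ) :
    exp (k * t) - exp (k * s) ≤ ‖logSpiral k t - logSpiral k s‖ := by
  simpa only [norm_apply] using norm_sub_norm_le (logSpiral k t) (logSpiral k s)

lemma norm_sub_add_two_pi {k : ℝ} (hk : 0 ≤ k) (s : ℝ) :
    ‖logSpiral k (s + 2 * π) - logSpiral k s‖ = exp (k * (s + 2 * π)) - exp (k * s) := by
  have hturn : 1 ≤ exp (k * (2 * π)) := one_le_exp (by positivity)
  calc ‖logSpiral k (s + 2 * π) - logSpiral k s‖
      = ‖(exp (k * (2 * π)) - 1) • logSpiral k s‖ := by rw [add_two_pi, sub_smul, one_smul]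
    _ = (exp (k * (2 * π)) - 1) * exp (k * s) := by
      rw [norm_smul, norm_apply, Real.norm_of_nonneg (by linarith)]
    _ = exp (k * (s + 2 * π)) - exp (k * s) := by rw [mul_add, exp_add]; ring

variable {k}

lemma arc_div_chord_le (hk : 0 < k) (s t : ℝ) :
    (∫ r in s..t, ‖deriv (logSpiral k) r‖) / ‖logSpiral k t - logSpiral k s‖ ≤
      √(k ^ 2 + 1) / k := by
  rw [integral_norm_deriv hk.ne']
  refine div_le_of_le_mul₀ (norm_nonneg _) (by positivity) ?_
  gcongr
  exact exp_sub_exp_le_norm_sub k s t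

lemma arc_div_chord_add_two_pi (hk : 0 < k) (s : ℝ) :
    (∫ r in s..s + 2 * π, ‖deriv (logSpiral k) r‖) /
      ‖logSpiral k (s + 2 * π) - logSpiral k s‖ = √(k ^ 2 + 1) / k := by
  have hpos : 0 < exp (k * (s + 2 * π)) - exp (k * s) :=
    sub_pos.mpr (exp_lt_exp.mpr (by nlinarith [pi_pos]))
  rw [integral_norm_deriv hk.ne', norm_sub_add_two_pi hk.le, mul_div_cancel_right₀ _ hpos.ne']

end logSpiral

/-- For every `k > 0`, the supremum over all pairs of parameters `s < t` of the
arc-length-to-chord ratio of the logarithmic spiral `φ(s) = e^{ks} (cos s, sin s)`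
equals `√(k² + 1)/k`; this is the distortion of the spiral (including its center). -/
theorem log_spiral_distortion (k : ℝ) (hk : 0 < k)
    (φ : ℝ → EuclideanSpace ℝ (Fin 2))
    (hφ : φ = fun s => (WithLp.equiv 2 (Fin 2 → ℝ)).symm
      ![Real.exp (k * s) * Real.cos s, Real.exp (k * s) * Real.sin s]) :
    sSup {x : ℝ | ∃ s t : ℝ, s < t ∧
        x = (∫ r in s..t, ‖deriv φ r‖) / ‖φ t - φ s‖} =
      Real.sqrt (k ^ 2 + 1) / k := by
  obtain rfl : φ = logSpiral k := hφ
  refine IsGreatest.csSup_eq ⟨⟨0, 0 + 2 * π, by positivity, ?_⟩, ?_⟩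
  · exact (logSpiral.arc_div_chord_add_two_pi hk 0).symm
  · rintro x ⟨s, t, -, rfl⟩
    exact logSpiral.arc_div_chord_le hk s t
end

section
/- For every real number k > 0 and every fixed t ∈ ℝ, the chord-arc ratio of the logarithmic spiral tends to √(k² + 1)/k as the lower parameter tends to −∞: the function s ↦ (∫_s^t ‖φ'(r)‖ dr) / ‖φ(t) − φ(s)‖ tends to √(k² + 1)/k as s → −∞. -/
/-!
Identifying `ℝ²` isometrically with `ℂ`, the spiral is `s ↦ exp ((k + i) s)`, so its speed is
`|k + i| e^{ks}` and the arc length from `-∞` to `t` is `|k + i| e^{kt} / k`, while the point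
`φ s` tends to the origin and the chord `‖φ t - φ s‖` tends to `‖φ t‖ = e^{kt}`.
-/

open Real Filter Topology Set MeasureTheory

theorem hasDerivAt_cexp_mul_ofReal (a : ℂ) (s : ℝ) :
    HasDerivAt (fun s : ℝ => Complex.exp (a * s)) (a * Complex.exp (a * s)) s := by
  simpa [mul_comm] using ((hasDerivAt_id (s : ℂ)).const_mul a).cexp.comp_ofReal

theorem norm_cexp_mul_ofReal (a : ℂ) (s : ℝ) : ‖Complex.exp (a * s)‖ = Real.exp (a.re * s) := by
  simp [Complex.norm_exp]

section ComplexExponentialCurve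

variable {E : Type*} [NormedAddCommGroup E] [NormedSpace ℝ E] (e : ℂ →ₗᵢ[ℝ] E) {a : ℂ}

theorem norm_deriv_linearIsometry_cexp_mul (r : ℝ) :
    ‖deriv (fun s : ℝ => e (Complex.exp (a * s))) r‖ = ‖a‖ * Real.exp (a.re * r) := by
  have h : HasDerivAt (fun s : ℝ => e (Complex.exp (a * s))) (e (a * Complex.exp (a * r))) r :=
    e.toContinuousLinearMap.hasFDerivAt.comp_hasDerivAt r (hasDerivAt_cexp_mul_ofReal a r)
  rw [h.deriv]
  simp [norm_cexp_mul_ofReal]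

theorem tendsto_linearIsometry_cexp_mul_atBot (ha : 0 < a.re) :
    Tendsto (fun s : ℝ => e (Complex.exp (a * s))) atBot (𝓝 0) := by
  rw [tendsto_zero_iff_norm_tendsto_zero]
  simp_rw [e.norm_map, norm_cexp_mul_ofReal]
  exact tendsto_exp_atBot.comp (tendsto_id.const_mul_atBot ha)

theorem tendsto_integral_norm_deriv_linearIsometry_cexp_mul_atBot (ha : 0 < a.re) (t : ℝ) :
    Tendsto (fun s => ∫ r in s..t, ‖deriv (fun s : ℝ => e (Complex.exp (a * s))) r‖) atBot
      (𝓝 (‖a‖ * Real.exp (a.re * t) / a.re)) := by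
  simp_rw [norm_deriv_linearIsometry_cexp_mul, intervalIntegral.integral_const_mul, mul_div_assoc,
    ← integral_exp_mul_Iic ha]
  exact (intervalIntegral_tendsto_integral_Iic t (integrableOn_exp_mul_Iic ha t)
    tendsto_id).const_mul _

theorem tendsto_arcLength_div_chord_linearIsometry_cexp_mul_atBot (ha : 0 < a.re) (t : ℝ) :
    Tendsto (fun s => (∫ r in s..t, ‖deriv (fun s : ℝ => e (Complex.exp (a * s))) r‖) /
      ‖e (Complex.exp (a * t)) - e (Complex.exp (a * s))‖) atBot (𝓝 (‖a‖ / a.re)) := by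
  have hchord : Tendsto (fun s : ℝ => ‖e (Complex.exp (a * t)) - e (Complex.exp (a * s))‖) atBot
      (𝓝 (Real.exp (a.re * t))) := by
    simpa [norm_cexp_mul_ofReal] using
      ((tendsto_const_nhds (x := e (Complex.exp (a * t)))).sub
        (tendsto_linearIsometry_cexp_mul_atBot e ha)).norm
  rw [show ‖a‖ / a.re = ‖a‖ * Real.exp (a.re * t) / a.re / Real.exp (a.re * t) by field_simp]
  exact (tendsto_integral_norm_deriv_linearIsometry_cexp_mul_atBot e ha t).div hchord
    (exp_ne_zero _)

end ComplexExponentialCurve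

theorem logSpiral_eq_repr_cexp (k s : ℝ) :
    (WithLp.equiv 2 (Fin 2 → ℝ)).symm
        ![Real.exp (k * s) * Real.cos s, Real.exp (k * s) * Real.sin s] =
      Complex.orthonormalBasisOneI.repr (Complex.exp ((k + Complex.I) * s)) := by
  ext i
  fin_cases i <;> simp [Complex.exp_re, Complex.exp_im]

/-- For every `k > 0` and fixed `t`, the arc-length-to-chord ratio of the logarithmic
spiral `φ(s) = e^{ks} (cos s, sin s)` tends to `√(k² + 1)/k` as the lower parameter
tends to `−∞`. -/
theorem log_spiral_ratio_tendsto (k : ℝ) (hk : 0 < k)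
    (φ : ℝ → EuclideanSpace ℝ (Fin 2))
    (hφ : φ = fun s => (WithLp.equiv 2 (Fin 2 → ℝ)).symm
      ![Real.exp (k * s) * Real.cos s, Real.exp (k * s) * Real.sin s]) (t : ℝ) :
    Tendsto (fun s => (∫ r in s..t, ‖deriv φ r‖) / ‖φ t - φ s‖) atBot
      (nhds (Real.sqrt (k ^ 2 + 1) / k)) := by
  have hφ' : φ = fun s : ℝ =>
      Complex.orthonormalBasisOneI.repr.toLinearIsometry (Complex.exp ((k + Complex.I) * s)) := by
    rw [hφ]
    funext s
    exact logSpiral_eq_repr_cexp k s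
  have hre : ((k : ℂ) + Complex.I).re = k := by simp
  have hnorm : ‖(k : ℂ) + Complex.I‖ = √(k ^ 2 + 1) := by
    simpa using Complex.norm_add_mul_I k 1
  have hlim := tendsto_arcLength_div_chord_linearIsometry_cexp_mul_atBot
    Complex.orthonormalBasisOneI.repr.toLinearIsometry (hre ▸ hk) t
  rw [hre, hnorm] at hlim
  rwa [hφ']
end

section
/- For all real numbers a > 0, b ≥ 0 and every real number t, one has (t + b) / √(t² + a²) ≤ √(a² + b²) / a. -/
open Real

/-- For all reals `a > 0`, `b ≥ 0` and every real `t`,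
`(t + b)/√(t² + a²) ≤ √(a² + b²)/a`. -/
theorem ratio_le_max (a b t : ℝ) (ha : 0 < a) (hb : 0 ≤ b) :
    (t + b) / Real.sqrt (t ^ 2 + a ^ 2) ≤ Real.sqrt (a ^ 2 + b ^ 2) / a := by
  have hs : 0 < Real.sqrt (t ^ 2 + a ^ 2) := Real.sqrt_pos.2 (by positivity)
  have hr : 0 < Real.sqrt (a ^ 2 + b ^ 2) := Real.sqrt_pos.2 (by positivity)
  have hs2 : Real.sqrt (t ^ 2 + a ^ 2) ^ 2 = t ^ 2 + a ^ 2 := Real.sq_sqrt (by positivity)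
  have hr2 : Real.sqrt (a ^ 2 + b ^ 2) ^ 2 = a ^ 2 + b ^ 2 := Real.sq_sqrt (by positivity)
  rw [div_le_div_iff₀ hs ha]
  nlinarith [sq_nonneg (t * b - a ^ 2), sq_nonneg (Real.sqrt (t ^ 2 + a ^ 2) * Real.sqrt (a ^ 2 + b ^ 2) - a * (t + b)), mul_pos hs hr]
end
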